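/- arXiv:2012.09541 — 2 statements merged into one kernel-verified Lean document; each statement's English description precedes it below -/
import Mathlib

section
/- For every hiring problem (W, M, s, m) and every quota q ≤ |W| with m·q an integer, the minority reserves choice set C — consisting of the t = min(m·q, |M|) highest-scoring workers of M together with the q − t highest-scoring workers of W not already chosen — respects minority rights for quota q and is minority fair. -/
open Finset

variable {ι : Type*} [DecidableEq ι]

/-- The (up to) `k` highest-scoring elements of `X`, chosen greedily
(with injective scores this is the set of the `k` highest-scoring elements). -/
noncomputable def topOf (s : ι → ℝ) : ℕ → Finset ι → Finset ι
  | 0, _ => ∅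
  | k + 1, X =>
    if h : X.Nonempty then
      insert (X.exists_max_image s h).choose
        (topOf s k (X.erase (X.exists_max_image s h).choose))
    else ∅

lemma topOf_subset (s : ι → ℝ) : ∀ (k : ℕ) (X : Finset ι), topOf s k X ⊆ X
  | 0, X => by simp [topOf]
  | k+1, X => by
    rw [topOf]
    split_ifs with h
    · intro a ha
      rcases Finset.mem_insert.1 ha with rfl | ha
      · exact (X.exists_max_image s h).choose_spec.1
      · exact Finset.erase_subset _ _ (topOf_subset s k _ ha)
    · simp

lemma card_topOf (s : ι → ℝ) : ∀ (k : ℕ) (X : Finset ι), (topOf s k X).card = min k X.card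
  | 0, X => by simp [topOf]
  | k+1, X => by
    rw [topOf]
    split_ifs with h
    · have hc := (X.exists_max_image s h).choose_spec.1
      have hnot : (X.exists_max_image s h).choose ∉
          topOf s k (X.erase (X.exists_max_image s h).choose) :=
        fun hmem => (Finset.notMem_erase _ _) (topOf_subset s k _ hmem)
      rw [Finset.card_insert_of_notMem hnot, card_topOf s k, Finset.card_erase_of_mem hc]
      have : 1 ≤ X.card := Finset.card_pos.2 h
      omega
    · simp [Finset.not_nonempty_iff_eq_empty.1 h]

lemma topOf_max (s : ι → ℝ) :
    ∀ (k : ℕ) (X : Finset ι), ∀ a ∈ topOf s k X, ∀ b ∈ X, b ∉ topOf s k X → s b ≤ s a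
  | 0, X => by simp [topOf]
  | k+1, X => by
    intro a ha b hb hbn
    rw [topOf] at ha hbn
    by_cases h : X.Nonempty
    · rw [dif_pos h] at ha hbn
      rcases Finset.mem_insert.1 ha with rfl | ha'
      · exact (X.exists_max_image s h).choose_spec.2 b hb
      · have hb' : b ∈ X.erase (X.exists_max_image s h).choose :=
          Finset.mem_erase.2 ⟨fun hbc => hbn (hbc ▸ Finset.mem_insert_self _ _), hb⟩
        exact topOf_max s k _ a ha' b hb' (fun hh => hbn (Finset.mem_insert_of_mem hh))
    · rw [dif_neg h] at ha; exact absurd ha (Finset.notMem_empty a)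

lemma topOf_max_strict (s : ι → ℝ) (k : ℕ) (X : Finset ι) (hinj : Set.InjOn s X)
    {a b : ι} (ha : a ∈ topOf s k X) (hb : b ∈ X) (hbn : b ∉ topOf s k X) : s b < s a := by
  have hle := topOf_max s k X a ha b hb hbn
  have hax : a ∈ X := topOf_subset s k X ha
  rcases hle.lt_or_eq with h | h
  · exact h
  · exact absurd (hinj hb hax h) (fun e => hbn (by rwa [e]))

lemma topOf_eq_self (s : ι → ℝ) {k : ℕ} {X : Finset ι} (h : X.card ≤ k) : topOf s k X = X :=
  Finset.eq_of_subset_of_card_le (topOf_subset s k X) (by rw [card_topOf]; omega)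

/-- `H` respects minority rights for quota `q` (w.r.t. minorities `M` and ratio `m`):
either `|M| ≥ m·q` and the fraction of minorities in `H` is at least `m`
(stated multiplicatively as `ω(H) ≥ m·|H|`), or `|M| < m·q` and `M ⊆ H`. -/
def RespectsRightsSet (M : Finset ι) (m : ℝ) (q : ℕ) (H : Finset ι) : Prop :=
  (m * (q : ℝ) ≤ (M.card : ℝ) ∧ m * (H.card : ℝ) ≤ ((H ∩ M).card : ℝ)) ∨
  ((M.card : ℝ) < m * (q : ℝ) ∧ M ⊆ H)

/-- `H` is minority fair (w.r.t. workers `W`, minorities `M`, scores `s`, ratio `m`):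
(i) within `M` and within `W ∖ M` selection follows the scores; (ii) no minority with a
higher score is left out while a non-minority is hired; (iii) a lower-scoring minority is
hired over a higher-scoring non-minority only if the minority fraction of `H` is at most
`m` (stated multiplicatively as `ω(H) ≤ m·|H|`). -/
def MinorityFairSet (W M : Finset ι) (s : ι → ℝ) (m : ℝ) (H : Finset ι) : Prop :=
  (∀ w ∈ M, ∀ w' ∈ M, w ∈ H → w' ∉ H → s w' < s w) ∧
  (∀ w ∈ W \ M, ∀ w' ∈ W \ M, w ∈ H → w' ∉ H → s w' < s w) ∧
  (∀ w ∈ W \ M, ∀ w' ∈ M, s w < s w' → w ∈ H → w' ∈ H) ∧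
  ((∃ w ∈ W \ M, ∃ w' ∈ M, s w' < s w ∧ w ∉ H ∧ w' ∈ H) →
    ((H ∩ M).card : ℝ) ≤ m * (H.card : ℝ))

/-- For every hiring problem `(W, M, s, m)` and every quota `q ≤ |W|`
with `m·q` an integer, the minority reserves choice set `C` — the `t = min(m·q, |M|)`
highest-scoring workers of `M` together with the `q − t` highest-scoring workers of `W`
not already chosen — respects minority rights for quota `q` and is minority fair. -/
theorem minority_reserves_choice_rights_and_fair (W M : Finset ι) (s : ι → ℝ) (m : ℝ)
    (q : ℕ) (hMW : M ⊆ W) (hs : Set.InjOn s ↑W) (hm0 : 0 ≤ m) (hm1 : m ≤ 1)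
    (hq : q ≤ W.card) (hint : ∃ k : ℕ, m * (q : ℝ) = (k : ℝ)) :
    RespectsRightsSet M m q
        (topOf s (min ⌈m * (q : ℝ)⌉₊ M.card) M ∪
          topOf s (q - (topOf s (min ⌈m * (q : ℝ)⌉₊ M.card) M).card)
            (W \ topOf s (min ⌈m * (q : ℝ)⌉₊ M.card) M)) ∧
      MinorityFairSet W M s m
        (topOf s (min ⌈m * (q : ℝ)⌉₊ M.card) M ∪
          topOf s (q - (topOf s (min ⌈m * (q : ℝ)⌉₊ M.card) M).card)
            (W \ topOf s (min ⌈m * (q : ℝ)⌉₊ M.card) M)) := by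
  obtain ⟨k, hk⟩ := hint
  have hceil : ⌈m * (q : ℝ)⌉₊ = k := by rw [hk, Nat.ceil_natCast]
  set t := min ⌈m * (q : ℝ)⌉₊ M.card with ht
  set T := topOf s t M with hT
  set R := topOf s (q - T.card) (W \ T) with hR
  set C := T ∪ R with hC
  have hkq : k ≤ q := by
    have : (k : ℝ) ≤ (q : ℝ) := by
      rw [← hk]; nlinarith [Nat.cast_nonneg (α := ℝ) q]
    exact_mod_cast this
  have htk : t ≤ k := by rw [ht, hceil]; exact min_le_left _ _
  have hTsub : T ⊆ M := topOf_subset s t M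
  have hTW : T ⊆ W := hTsub.trans hMW
  have hTcard : T.card = t := by
    rw [hT, card_topOf]; exact min_eq_left (min_le_right _ _)
  have hRsub : R ⊆ W \ T := topOf_subset s _ _
  have hdisj : Disjoint T R := by
    refine Finset.disjoint_left.2 fun a haT haR => ?_
    exact (Finset.mem_sdiff.1 (hRsub haR)).2 haT
  have hRcard : R.card = q - t := by
    rw [hR, card_topOf, Finset.card_sdiff_of_subset hTW, hTcard]
    omega
  have hCcard : C.card = q := by
    rw [hC, Finset.card_union_of_disjoint hdisj, hTcard, hRcard]
    omega
  have hinjM : Set.InjOn s ↑M := hs.mono (by exact_mod_cast hMW)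
  have hinjWT : Set.InjOn s ↑(W \ T) := hs.mono (by exact_mod_cast Finset.sdiff_subset)
  -- key strict comparisons
  have key1 : ∀ a ∈ T, ∀ b ∈ M, b ∉ T → s b < s a := fun a ha b hb hbn =>
    topOf_max_strict s t M hinjM ha hb hbn
  have key2 : ∀ a ∈ R, ∀ b ∈ W \ T, b ∉ R → s b < s a := fun a ha b hb hbn =>
    topOf_max_strict s _ _ hinjWT ha hb hbn
  have hTC : T ⊆ C := Finset.subset_union_left
  have hRC : R ⊆ C := Finset.subset_union_right
  constructor
  · -- respects rights
    by_cases hcase : m * (q : ℝ) ≤ (M.card : ℝ)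
    · left
      refine ⟨hcase, ?_⟩
      have hkM : k ≤ M.card := by
        have : (k : ℝ) ≤ (M.card : ℝ) := hk ▸ hcase
        exact_mod_cast this
      have htkeq : t = k := by rw [ht, hceil]; exact min_eq_left hkM
      have hTCM : T ⊆ C ∩ M := Finset.subset_inter hTC hTsub
      have hcard_le : k ≤ (C ∩ M).card := by
        calc k = T.card := by rw [hTcard, htkeq]
        _ ≤ (C ∩ M).card := Finset.card_le_card hTCM
      rw [hCcard, hk]
      exact_mod_cast hcard_le
    · right
      push_neg at hcase
      refine ⟨hcase, ?_⟩
      have hMk : M.card ≤ k := by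
        have : (M.card : ℝ) ≤ (k : ℝ) := le_of_lt (hk ▸ hcase)
        exact_mod_cast this
      have : T = M := topOf_eq_self s (by rw [ht, hceil]; omega)
      rw [← this]; exact hTC
  · -- minority fair
    have memC : ∀ {x}, x ∈ C ↔ x ∈ T ∨ x ∈ R := fun {x} => Finset.mem_union
    have notT_of_notM : ∀ {x}, x ∉ M → x ∉ T := fun {x} hx hxT => hx (hTsub hxT)
    refine ⟨?_, ?_, ?_, ?_⟩
    · -- within M
      intro w hw w' hw' hwC hw'C
      have hw'T : w' ∉ T := fun h => hw'C (hTC h)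
      have hw'R : w' ∉ R := fun h => hw'C (hRC h)
      rcases memC.1 hwC with hwT | hwR
      · exact key1 w hwT w' hw' hw'T
      · exact key2 w hwR w' (Finset.mem_sdiff.2 ⟨hMW hw', hw'T⟩) hw'R
    · -- within W \ M
      intro w hw w' hw' hwC hw'C
      have hwM := (Finset.mem_sdiff.1 hw).2
      have hw'M := (Finset.mem_sdiff.1 hw').2
      have hwR : w ∈ R := (memC.1 hwC).resolve_left (fun h => hwM (hTsub h))
      have hw'R : w' ∉ R := fun h => hw'C (hRC h)
      exact key2 w hwR w' (Finset.mem_sdiff.2 ⟨(Finset.mem_sdiff.1 hw').1,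
        notT_of_notM hw'M⟩) hw'R
    · -- no higher-scoring minority left out
      intro w hw w' hw' hlt hwC
      by_contra hw'C
      have hwM := (Finset.mem_sdiff.1 hw).2
      have hwR : w ∈ R := (memC.1 hwC).resolve_left (fun h => hwM (hTsub h))
      have hw'T : w' ∉ T := fun h => hw'C (hTC h)
      have hw'R : w' ∉ R := fun h => hw'C (hRC h)
      exact absurd (key2 w hwR w' (Finset.mem_sdiff.2 ⟨hMW hw', hw'T⟩) hw'R) (by linarith)
    · -- ratio bound
      rintro ⟨w, hw, w', hw', hlt, hwC, hw'C⟩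
      have hwM := (Finset.mem_sdiff.1 hw).2
      have hwWT : w ∈ W \ T := Finset.mem_sdiff.2 ⟨(Finset.mem_sdiff.1 hw).1,
        notT_of_notM hwM⟩
      have hwR : w ∉ R := fun h => hwC (hRC h)
      have hw'T : w' ∈ T := by
        rcases memC.1 hw'C with h | h
        · exact h
        · exact absurd (key2 w' h w hwWT hwR) (by linarith)
      have hCM : C ∩ M = T := by
        apply Finset.Subset.antisymm
        · intro x hx
          obtain ⟨hxC, hxM⟩ := Finset.mem_inter.1 hx
          by_contra hxT
          have hxR : x ∈ R := (memC.1 hxC).resolve_left hxT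
          have h1 : s w < s x := key2 x hxR w hwWT hwR
          have h2 : s x < s w' := key1 w' hw'T x hxM hxT
          linarith
        · exact Finset.subset_inter hTC hTsub
      rw [hCM, hTcard, hCcard, hk]
      exact_mod_cast htk
end

section
/- The Brazilian rule is not minority fair: there exist a finite set of workers W, a subset M ⊆ W, an injective score function s, a minority ratio m with 0 ≤ m ≤ 1, a parameter k ≤ |W| with |M| ≥ ⌈m·k⌉, and a single-round quota q ≤ k with m·q an integer, such that the set φ^B(W,⟨q⟩) selected by the Brazilian rule with parameter k is not minority fair. -/
open Finset

variable {ι : Type*} [DecidableEq ι]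

/-- Auxiliary recursion for the Brazilian rule: `TM` and `O` are the two fixed groups,
`A` is the set of workers hired in earlier rounds.  In a round with quota `q`, the
`⌈m·q⌉` highest-scoring not-yet-hired workers of `TM` and the `q − ⌈m·q⌉`
highest-scoring not-yet-hired workers of `O` are hired. -/
noncomputable def phiBaux (s : ι → ℝ) (m : ℝ) (TM O : Finset ι) :
    Finset ι → List ℕ → Finset ι
  | _, [] => ∅
  | A, q :: rest =>
    let H := topOf s ⌈m * (q : ℝ)⌉₊ (TM \ A) ∪ topOf s (q - ⌈m * (q : ℝ)⌉₊) (O \ A)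
    H ∪ phiBaux s m TM O (A ∪ H) rest

/-- The Brazilian rule `φ^B` with parameter `k`: first form `TM`, the `⌈m·k⌉`
highest-scoring workers of `M`, and `O`, the `k − ⌈m·k⌉` highest-scoring workers of
`W ∖ TM`; then hire round by round from `TM` and `O`, starting from the set `A` of
previously hired workers. -/
noncomputable def phiB (W M : Finset ι) (s : ι → ℝ) (m : ℝ) (k : ℕ)
    (A : Finset ι) (lam : List ℕ) : Finset ι :=
  phiBaux s m (topOf s ⌈m * (k : ℝ)⌉₊ M)
    (topOf s (k - ⌈m * (k : ℝ)⌉₊) (W \ topOf s ⌈m * (k : ℝ)⌉₊ M)) A lam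


/-- Score function for the counterexample. -/
noncomputable def scEx : ℕ → ℝ := fun n => (n : ℝ)

lemma topOf_zero (s : ℕ → ℝ) (X : Finset ℕ) : topOf s 0 X = ∅ := rfl

lemma topOf_scEx_succ (k : ℕ) {X : Finset ℕ} {a : ℕ} (ha : a ∈ X)
    (hmax : ∀ b ∈ X, b ≠ a → b < a) :
    topOf scEx (k + 1) X = insert a (topOf scEx k (X.erase a)) := by
  have h : X.Nonempty := ⟨a, ha⟩
  have hc : (X.exists_max_image scEx h).choose = a := by
    obtain ⟨hcX, hcmax⟩ := (X.exists_max_image scEx h).choose_spec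
    by_contra hne
    exact absurd (hcmax a ha)
      (not_le.mpr (show scEx _ < scEx a from Nat.cast_lt.mpr (hmax _ hcX hne)))
  rw [topOf, dif_pos h, hc]

/-- The Brazilian rule is not minority fair: there is a hiring problem
`(W, M, s, m)`, a parameter `k ≤ |W|` with `|M| ≥ ⌈m·k⌉`, and a single-round quota
`q ≤ k` with `m·q` an integer, such that `φ^B(W,⟨q⟩)` is not minority fair. -/
theorem phiB_not_minority_fair :
    ∃ (W M : Finset ℕ) (s : ℕ → ℝ) (m : ℝ) (k q : ℕ),
      M ⊆ W ∧ Set.InjOn s ↑W ∧ 0 ≤ m ∧ m ≤ 1 ∧ k ≤ W.card ∧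
      ⌈m * (k : ℝ)⌉₊ ≤ M.card ∧ q ≤ k ∧ (∃ j : ℕ, m * (q : ℝ) = (j : ℝ)) ∧
      ¬ MinorityFairSet W M s m (phiB W M s m k ∅ [q]) := by
  classical
  refine ⟨{0, 1, 2, 3}, {2, 3}, scEx, 1/2, 4, 2, by decide,
    fun a _ b _ h => Nat.cast_injective h, by norm_num, by norm_num, by decide,
    ?_, by norm_num, ⟨1, by norm_num⟩, ?_⟩
  · norm_num
  · have hc4 : ⌈(1/2 : ℝ) * ((4 : ℕ) : ℝ)⌉₊ = 2 := by norm_num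
    have hc2 : ⌈(1/2 : ℝ) * ((2 : ℕ) : ℝ)⌉₊ = 1 := by norm_num
    have hTM : topOf scEx 2 ({2, 3} : Finset ℕ) = {3, 2} := by
      rw [show (2 : ℕ) = 1 + 1 from rfl,
        topOf_scEx_succ 1 (a := 3) (by decide) (by decide),
        show ({2, 3} : Finset ℕ).erase 3 = {2} from by decide,
        topOf_scEx_succ 0 (a := 2) (by decide) (by decide), topOf_zero]
      decide
    have hO : topOf scEx 2 (({0, 1, 2, 3} : Finset ℕ) \ {3, 2}) = {1, 0} := by
      rw [show (({0, 1, 2, 3} : Finset ℕ) \ {3, 2}) = {0, 1} from by decide,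
        show (2 : ℕ) = 1 + 1 from rfl,
        topOf_scEx_succ 1 (a := 1) (by decide) (by decide),
        show ({0, 1} : Finset ℕ).erase 1 = {0} from by decide,
        topOf_scEx_succ 0 (a := 0) (by decide) (by decide), topOf_zero]
      decide
    have hH : phiB {0, 1, 2, 3} {2, 3} scEx (1/2) 4 ∅ [2] = {3, 1} := by
      rw [phiB, hc4, hTM, show ((4 : ℕ) - 2) = 2 from rfl, hO]
      rw [phiBaux, phiBaux]
      simp only [hc2, Finset.sdiff_empty]
      rw [show ((2 : ℕ) - 1) = 0 + 1 from rfl,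
        show (1 : ℕ) = 0 + 1 from rfl,
        topOf_scEx_succ 0 (a := 3) (X := ({3, 2} : Finset ℕ)) (by decide) (by decide),
        topOf_scEx_succ 0 (a := 1) (X := ({1, 0} : Finset ℕ)) (by decide) (by decide),
        topOf_zero, topOf_zero]
      decide
    rw [hH]
    intro hfair
    have h3 := hfair.2.2.1 1 (by decide) 2 (by decide)
      (by norm_num [scEx]) (by decide)
    exact absurd h3 (by decide)
end
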